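/- arXiv:0901.3795 — 3 statements merged into one kernel-verified Lean document; each statement's English description precedes it below -/
import Mathlib

section
/- Let Z_n = E[1{θ₁ ≤ n < θ₂} | F_n] where (F_n) is a filtration and θ₁ ≤ θ₂ are ℕ-valued random variables. Then lim_{n→∞} Z_n = 0 almost surely. -/
/-!
Fix `k`. For `n ≥ k` the indicator of `θ₁ ≤ n < θ₂` is bounded by the indicator of `k < θ₂`, so
`Z_n ≤ E[1{k < θ₂} | F_n]`, which by Lévy's upward theorem tends to `E[1{k < θ₂} | F_∞]` as
`n → ∞`. These limits decrease in `k`, and their integrals `P(k < θ₂)` tend to `0`, so they tend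
to `0` almost surely, and with them `Z_n`.
-/

open Filter MeasureTheory
open scoped Topology

theorem tendsto_of_forall_eventually_le_of_tendsto {α : Type*} [TopologicalSpace α]
    [LinearOrder α] [OrderTopology α] {a c : ℕ → α} {b : ℕ → ℕ → α} {l : α}
    (ha : ∀ n, l ≤ a n) (hab : ∀ k, ∀ᶠ n in atTop, a n ≤ b k n)
    (hb : ∀ k, Tendsto (b k) atTop (𝓝 (c k))) (hc : Tendsto c atTop (𝓝 l)) :
    Tendsto a atTop (𝓝 l) := by
  refine tendsto_order.2 ⟨fun x hx => .of_forall fun n => hx.trans_le (ha n), fun x hx => ?_⟩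
  obtain ⟨k, hk⟩ := (hc.eventually (gt_mem_nhds hx)).exists
  filter_upwards [hab k, (hb k).eventually (gt_mem_nhds hk)] with n hle hlt
  exact hle.trans_lt hlt

theorem ite_one_zero_le_ite_one_zero {p q : Prop} [Decidable p] [Decidable q] (h : p → q) :
    (if p then (1 : ℝ) else 0) ≤ if q then 1 else 0 := by
  split_ifs with hp hq <;> first | exact absurd (h hp) hq | norm_num

theorem integrable_ite_one_zero {Ω : Type*} {m0 : MeasurableSpace Ω} {μ : Measure Ω}
    [IsFiniteMeasure μ] {p : Ω → Prop} [DecidablePred p] (hp : MeasurableSet {ω | p ω}) :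
    Integrable (fun ω => if p ω then (1 : ℝ) else 0) μ := by
  refine ((integrable_const (1 : ℝ)).indicator hp).congr (.of_forall fun ω => ?_)
  by_cases h : p ω <;> simp [h]

section CondExp

variable {Ω : Type*} {m m0 : MeasurableSpace Ω} {μ : Measure Ω}

theorem ae_tendsto_condExp_zero_of_antitone (hm : m ≤ m0) [SigmaFinite (μ.trim hm)]
    {g : ℕ → Ω → ℝ} (hg_int : ∀ k, Integrable (g k) μ)
    (hg_anti : ∀ᵐ ω ∂μ, Antitone fun k => g k ω)
    (hg_lim : ∀ᵐ ω ∂μ, Tendsto (fun k => g k ω) atTop (𝓝 0)) :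
    ∀ᵐ ω ∂μ, Tendsto (fun k => (μ[g k | m]) ω) atTop (𝓝 0) := by
  have hc_anti : ∀ᵐ ω ∂μ, Antitone fun k => (μ[g k | m]) ω := by
    have h : ∀ k, μ[g (k + 1) | m] ≤ᵐ[μ] μ[g k | m] := fun k =>
      condExp_mono (hg_int _) (hg_int _) (by filter_upwards [hg_anti] with ω h using h k.le_succ)
    filter_upwards [ae_all_iff.2 h] with ω h using antitone_nat_of_succ_le h
  have hc_nonneg : ∀ᵐ ω ∂μ, ∀ k, 0 ≤ (μ[g k | m]) ω := ae_all_iff.2 fun k =>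
    condExp_nonneg (by filter_upwards [hg_anti, hg_lim] with ω h hω using h.le_of_tendsto hω k)
  have hg_integral : Tendsto (fun k => ∫ ω, g k ω ∂μ) atTop (𝓝 (∫ _, (0 : ℝ) ∂μ)) :=
    integral_tendsto_of_tendsto_of_antitone hg_int (integrable_zero _ _ _) hg_anti hg_lim
  refine tendsto_of_integral_tendsto_of_antitone (F := fun _ => 0) (fun k => integrable_condExp)
    (integrable_zero _ _ _) ?_ hc_anti hc_nonneg
  simpa only [integral_condExp hm] using hg_integral

theorem ae_tendsto_condExp_zero_of_le_antitone [IsFiniteMeasure μ] (ℱ : Filtration ℕ m0)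
    {f g : ℕ → Ω → ℝ} (hf_int : ∀ n, Integrable (f n) μ) (hf_nonneg : ∀ n, 0 ≤ᵐ[μ] f n)
    (hfg : ∀ k n, k ≤ n → f n ≤ᵐ[μ] g k) (hg_int : ∀ k, Integrable (g k) μ)
    (hg_anti : ∀ᵐ ω ∂μ, Antitone fun k => g k ω)
    (hg_lim : ∀ᵐ ω ∂μ, Tendsto (fun k => g k ω) atTop (𝓝 0)) :
    ∀ᵐ ω ∂μ, Tendsto (fun n => (μ[f n | ℱ n]) ω) atTop (𝓝 0) := by
  have hlevy : ∀ᵐ ω ∂μ, ∀ k,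
      Tendsto (fun n => (μ[g k | ℱ n]) ω) atTop (𝓝 ((μ[g k | ⨆ n, ℱ n]) ω)) :=
    ae_all_iff.2 fun k => tendsto_ae_condExp (g k)
  have hsup := ae_tendsto_condExp_zero_of_antitone (iSup_le ℱ.le) hg_int hg_anti hg_lim
  have hnonneg : ∀ᵐ ω ∂μ, ∀ n, 0 ≤ (μ[f n | ℱ n]) ω :=
    ae_all_iff.2 fun n => condExp_nonneg (hf_nonneg n)
  have hle : ∀ᵐ ω ∂μ, ∀ k n, k ≤ n → (μ[f n | ℱ n]) ω ≤ (μ[g k | ℱ n]) ω := by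
    refine ae_all_iff.2 fun k => ae_all_iff.2 fun n => ?_
    by_cases hkn : k ≤ n
    · filter_upwards [condExp_mono (hf_int n) (hg_int k) (hfg k n hkn)] with ω h using fun _ => h
    · exact .of_forall fun ω h => absurd h hkn
  filter_upwards [hlevy, hsup, hnonneg, hle] with ω hlevy hsup hnonneg hle
  exact tendsto_of_forall_eventually_le_of_tendsto hnonneg
    (fun k => (eventually_ge_atTop k).mono (hle k)) hlevy hsup

end CondExp

theorem condexp_indicator_between_tendsto_zero_general {Ω : Type*} {m0 : MeasurableSpace Ω}
    (μ : Measure Ω) [IsProbabilityMeasure μ] (ℱ : Filtration ℕ m0)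
    (θ₁ θ₂ : Ω → ℕ) (hθ₁ : Measurable θ₁) (hθ₂ : Measurable θ₂) :
    ∀ᵐ ω ∂μ, Tendsto
      (fun n => (μ[fun ω' => if θ₁ ω' ≤ n ∧ n < θ₂ ω' then (1 : ℝ) else 0 | ℱ n]) ω)
      atTop (nhds 0) := by
  refine ae_tendsto_condExp_zero_of_le_antitone ℱ (g := fun k ω => if k < θ₂ ω then 1 else 0)
    (fun n => integrable_ite_one_zero ((hθ₁ measurableSet_Iic).inter (hθ₂ measurableSet_Ioi)))
    (fun n => .of_forall fun ω => by positivity)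
    (fun k n hkn => .of_forall fun ω => ite_one_zero_le_ite_one_zero fun h => hkn.trans_lt h.2)
    (fun k => integrable_ite_one_zero (hθ₂ measurableSet_Ioi))
    (.of_forall fun ω i j hij => ite_one_zero_le_ite_one_zero hij.trans_lt)
    (.of_forall fun ω => tendsto_const_nhds.congr' ?_)
  filter_upwards [eventually_ge_atTop (θ₂ ω)] with k hk
  rw [if_neg hk.not_gt]

theorem condexp_indicator_between_tendsto_zero {Ω : Type*} {m0 : MeasurableSpace Ω}
    (μ : Measure Ω) [IsProbabilityMeasure μ] (ℱ : Filtration ℕ m0)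
    (θ₁ θ₂ : Ω → ℕ) (hθ₁ : Measurable θ₁) (hθ₂ : Measurable θ₂)
    (hle : ∀ ω, θ₁ ω ≤ θ₂ ω) :
    ∀ᵐ ω ∂μ, Tendsto
      (fun n => (μ[fun ω' => if θ₁ ω' ≤ n ∧ n < θ₂ ω' then (1 : ℝ) else 0 | ℱ n]) ω)
      atTop (nhds 0) :=
  condexp_indicator_between_tendsto_zero_general μ ℱ θ₁ θ₂ hθ₁ hθ₂
end

section
/- Suppose f²_t(u)/f¹_t(u) ≤ M for all t,u, and define r_n as in the preceding iteration. Then r_n(t,u) ≤ M for every n, t, u; hence the pointwise limit r*(t,u) = lim_n r_n(t,u) exists and satisfies r*(t,u) = max{ f²_t(u)/f¹_t(u), p₂ ∫ r*(u,s) f¹_u(s) μ(ds) }. -/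
open MeasureTheory Filter

theorem value_iteration_bounded_and_limit {E : Type*} [MeasurableSpace E] (μ : Measure E)
    (f1 f2 : E → E → ℝ) (hf1pos : ∀ t u, 0 < f1 t u) (hf2 : ∀ t u, 0 ≤ f2 t u)
    (hf1meas : ∀ t, Measurable (f1 t)) (hf2meas : ∀ t, Measurable (f2 t))
    (hf1int : ∀ t, ∫ s, f1 t s ∂μ = 1)
    (M : ℝ) (hM : ∀ t u, f2 t u / f1 t u ≤ M)
    (p₂ : ℝ) (hp₂ : 0 < p₂) (hp₂1 : p₂ < 1)
    (r : ℕ → E → E → ℝ)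
    (hr0 : ∀ t u, r 0 t u = f2 t u / f1 t u)
    (hrec : ∀ n t u, r (n + 1) t u =
      max (f2 t u / f1 t u) (p₂ * ∫ s, r n u s * f1 u s ∂μ))
    (hint : ∀ n u, Integrable (fun s => r n u s * f1 u s) μ) :
    (∀ n t u, r n t u ≤ M) ∧
    ∃ rstar : E → E → ℝ,
      (∀ t u, Tendsto (fun n => r n t u) atTop (nhds (rstar t u))) ∧
      (∀ t u, rstar t u =
        max (f2 t u / f1 t u) (p₂ * ∫ s, rstar u s * f1 u s ∂μ)) := by
  rcases isEmpty_or_nonempty E with hE | hE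
  · exact ⟨fun n t => (IsEmpty.false t).elim, fun _ _ => 0,
      fun t => (IsEmpty.false t).elim, fun t => (IsEmpty.false t).elim⟩
  -- f1 t is integrable
  have hf1int' : ∀ t, Integrable (f1 t) μ := by
    intro t
    by_contra h
    have h2 := hf1int t
    rw [integral_undef h] at h2
    exact one_ne_zero h2.symm
  obtain ⟨t₀⟩ := hE
  have hMnn : 0 ≤ M :=
    le_trans (div_nonneg (hf2 t₀ t₀) (hf1pos t₀ t₀).le) (hM t₀ t₀)
  -- boundedness
  have hbound : ∀ n t u, r n t u ≤ M := by
    intro n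
    induction n with
    | zero => intro t u; rw [hr0]; exact hM t u
    | succ n ih =>
      intro t u
      rw [hrec]
      refine max_le (hM t u) ?_
      have h1 : ∫ s, r n u s * f1 u s ∂μ ≤ ∫ s, M * f1 u s ∂μ :=
        integral_mono (hint n u) ((hf1int' u).const_mul M)
          (fun s => mul_le_mul_of_nonneg_right (ih u s) (hf1pos u s).le)
      rw [integral_const_mul, hf1int u, mul_one] at h1
      nlinarith [mul_le_mul_of_nonneg_left h1 hp₂.le]
  -- nonnegativity
  have hnn : ∀ n t u, 0 ≤ r n t u := by
    intro n t u
    cases n with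
    | zero => rw [hr0]; exact div_nonneg (hf2 t u) (hf1pos t u).le
    | succ n =>
      rw [hrec]
      exact le_trans (div_nonneg (hf2 t u) (hf1pos t u).le) (le_max_left _ _)
  -- monotonicity step
  have hstep : ∀ n t u, r n t u ≤ r (n + 1) t u := by
    intro n
    induction n with
    | zero => intro t u; rw [hr0, hrec, ← hr0 t u]; exact le_max_left _ _
    | succ n ih =>
      intro t u
      rw [hrec, hrec]
      refine max_le_max le_rfl ?_
      refine mul_le_mul_of_nonneg_left ?_ hp₂.le
      exact integral_mono (hint n u) (hint (n + 1) u)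
        (fun s => mul_le_mul_of_nonneg_right (ih u s) (hf1pos u s).le)
  have hmono : ∀ t u, Monotone fun n => r n t u :=
    fun t u => monotone_nat_of_le_succ (fun n => hstep n t u)
  set rstar : E → E → ℝ := fun t u => ⨆ n, r n t u with hrstar
  have hbdd : ∀ t u, BddAbove (Set.range fun n => r n t u) :=
    fun t u => ⟨M, fun x ⟨n, hn⟩ => hn ▸ hbound n t u⟩
  have htend : ∀ t u, Tendsto (fun n => r n t u) atTop (nhds (rstar t u)) :=
    fun t u => tendsto_atTop_ciSup (hmono t u) (hbdd t u)
  refine ⟨hbound, rstar, htend, fun t u => ?_⟩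
  have hrsnn : ∀ t u, 0 ≤ rstar t u :=
    fun t u => le_trans (hnn 0 t u) (le_ciSup (hbdd t u) 0)
  have hrsM : ∀ t u, rstar t u ≤ M := fun t u => ciSup_le (fun n => hbound n t u)
  -- integrability of the limit
  have hintstar : Integrable (fun s => rstar u s * f1 u s) μ := by
    have hmeas : AEStronglyMeasurable (fun s => rstar u s * f1 u s) μ :=
      aestronglyMeasurable_of_tendsto_ae atTop (fun n => (hint n u).1)
        (Filter.Eventually.of_forall fun s => (htend u s).mul_const (f1 u s))
    refine Integrable.mono ((hf1int' u).const_mul M) hmeas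
      (Filter.Eventually.of_forall fun s => ?_)
    rw [Real.norm_eq_abs, Real.norm_eq_abs,
      abs_of_nonneg (mul_nonneg (hrsnn u s) (hf1pos u s).le),
      abs_of_nonneg (mul_nonneg hMnn (hf1pos u s).le)]
    exact mul_le_mul_of_nonneg_right (hrsM u s) (hf1pos u s).le
  -- monotone convergence for the integrals
  have hlim : Tendsto (fun n => ∫ s, r n u s * f1 u s ∂μ) atTop
      (nhds (∫ s, rstar u s * f1 u s ∂μ)) := by
    refine integral_tendsto_of_tendsto_of_monotone (fun n => hint n u) hintstar
      (Filter.Eventually.of_forall fun s => ?_)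
      (Filter.Eventually.of_forall fun s => (htend u s).mul_const (f1 u s))
    exact fun a b hab => mul_le_mul_of_nonneg_right (hmono u s hab) (hf1pos u s).le
  have h1 : Tendsto (fun n => r (n + 1) t u) atTop
      (nhds (max (f2 t u / f1 t u) (p₂ * ∫ s, rstar u s * f1 u s ∂μ))) := by
    simp_rw [hrec]
    exact tendsto_const_nhds.max (hlim.const_mul p₂)
  have h2 : Tendsto (fun n => r (n + 1) t u) atTop (nhds (rstar t u)) :=
    (htend t u).comp (tendsto_add_atTop_nat 1)
  exact tendsto_nhds_unique h2 h1
end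

section
/- Under the joint a priori distribution of (θ₁, θ₂) given by P(θ₁=j,θ₂=k) = [π·1{j=0}+(1-π)p₁^{j-1}q₁·1{j>0}]·[ρ·1{k=j}+(1-ρ)p₂^{k-j-1}q₂·1{k>j}], for every n ∈ ℕ one has P(θ₁ ≤ n+1 < θ₂) = q₁·P(θ₂ > θ₁ > n) + p₂·P(θ₁ ≤ n < θ₂). -/
private lemma geom_tail {p q : ℝ} (hp0 : 0 ≤ p) (hp1 : p < 1) (hq : q = 1 - p)
    (c : ℝ) (m j : ℕ) (hjm : j ≤ m) :
    HasSum (fun k : ℕ => if m < k then c * p ^ (k - j - 1) * q else 0) (c * p ^ (m - j)) := by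
  set f : ℕ → ℝ := fun k => if m < k then c * p ^ (k - j - 1) * q else 0 with hf
  have h := (hasSum_geometric_of_lt_one hp0 hp1).mul_left (c * p ^ (m - j) * q)
  have hval : c * p ^ (m - j) * q * (1 - p)⁻¹ = c * p ^ (m - j) := by
    rw [hq]
    have : (1 : ℝ) - p ≠ 0 := by linarith
    field_simp
  rw [hval] at h
  have h2 : (fun i : ℕ => c * p ^ (m - j) * q * p ^ i) = fun i : ℕ => f (i + (m + 1)) := by
    funext i
    simp only [hf]
    rw [if_pos (by omega)]
    have he : i + (m + 1) - j - 1 = (m - j) + i := by omega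
    rw [he, pow_add]; ring
  rw [h2] at h
  have h3 := (hasSum_nat_add_iff (m + 1)).1 h
  have h4 : ∑ i ∈ Finset.range (m + 1), f i = 0 := by
    apply Finset.sum_eq_zero
    intro i hi
    simp only [hf]
    rw [if_neg (by simp at hi; omega)]
  rw [h4, add_zero] at h3
  exact h3

theorem prob_first_not_second_one_step (π ρ q₁ q₂ : ℝ) (hπ : 0 ≤ π) (hπ1 : π ≤ 1)
    (hρ : 0 ≤ ρ) (hρ1 : ρ ≤ 1) (hq₁ : 0 < q₁) (hq₁1 : q₁ < 1) (hq₂ : 0 < q₂) (hq₂1 : q₂ < 1)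
    (p₁ p₂ : ℝ) (hp₁ : p₁ = 1 - q₁) (hp₂ : p₂ = 1 - q₂)
    (joint : ℕ → ℕ → ℝ)
    (hjoint : ∀ j k, joint j k =
      (if j = 0 then π else (1 - π) * p₁ ^ (j - 1) * q₁) *
      (if k = j then ρ else if j < k then (1 - ρ) * p₂ ^ (k - j - 1) * q₂ else 0))
    (n : ℕ) :
    ∑' jk : ℕ × ℕ, (if jk.1 ≤ n + 1 ∧ n + 1 < jk.2 then joint jk.1 jk.2 else 0)
      = q₁ * ∑' jk : ℕ × ℕ, (if n < jk.1 ∧ jk.1 < jk.2 then joint jk.1 jk.2 else 0)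
      + p₂ * ∑' jk : ℕ × ℕ, (if jk.1 ≤ n ∧ n < jk.2 then joint jk.1 jk.2 else 0) := by
  have hp₁0 : 0 ≤ p₁ := by rw [hp₁]; linarith
  have hp₁1 : p₁ < 1 := by rw [hp₁]; linarith
  have hp₂0 : 0 ≤ p₂ := by rw [hp₂]; linarith
  have hp₂1 : p₂ < 1 := by rw [hp₂]; linarith
  have hq₁' : q₁ = 1 - p₁ := by rw [hp₁]; ring
  have hq₂' : q₂ = 1 - p₂ := by rw [hp₂]; ring
  have h1π : 0 ≤ 1 - π := by linarith
  have h1ρ : 0 ≤ 1 - ρ := by linarith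
  set A : ℕ → ℝ := fun j => if j = 0 then π else (1 - π) * p₁ ^ (j - 1) * q₁ with hA
  have hjointA : ∀ j k, joint j k =
      A j * (if k = j then ρ else if j < k then (1 - ρ) * p₂ ^ (k - j - 1) * q₂ else 0) := by
    intro j k
    rw [hjoint j k, hA]
  -- A is nonnegative
  have hA0 : ∀ j, 0 ≤ A j := by
    intro j
    by_cases hj : j = 0
    · simp only [hA, if_pos hj]; exact hπ
    · simp only [hA, if_neg hj]; positivity
  -- joint is nonnegative
  have hjnn : ∀ j k, 0 ≤ joint j k := by
    intro j k
    rw [hjointA j k]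
    apply mul_nonneg (hA0 j)
    split
    · exact hρ
    · split
      · positivity
      · exact le_rfl
  -- the slice sums
  have hslice : ∀ j, HasSum (fun k => joint j k) (A j) := by
    intro j
    have h1 : HasSum (fun k : ℕ => if k = j then A j * ρ else 0) (A j * ρ) :=
      hasSum_ite_eq j (A j * ρ)
    have h2 := geom_tail hp₂0 hp₂1 hq₂' (A j * (1 - ρ)) j j le_rfl
    have h3 := h1.add h2
    have heq : (fun k : ℕ => (if k = j then A j * ρ else 0) +
        (if j < k then A j * (1 - ρ) * p₂ ^ (k - j - 1) * q₂ else 0)) = fun k => joint j k := by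
      funext k
      rw [hjointA j k]
      rcases lt_trichotomy k j with hk | hk | hk
      · rw [if_neg (show ¬ k = j by omega), if_neg (show ¬ j < k by omega),
          if_neg (show ¬ k = j by omega), if_neg (show ¬ j < k by omega)]
        simp
      · subst hk
        simp [lt_irrefl]
      · rw [if_neg (show ¬ k = j by omega), if_pos hk,
          if_neg (show ¬ k = j by omega), if_pos hk]
        ring
    rw [heq] at h3
    have hval : A j * ρ + A j * (1 - ρ) * p₂ ^ (j - j) = A j := by
      simp only [Nat.sub_self, pow_zero]; ring
    rwa [hval] at h3
  -- tail sums of slices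
  have htail : ∀ j m, j ≤ m → HasSum (fun k => if m < k then joint j k else 0)
      (A j * (1 - ρ) * p₂ ^ (m - j)) := by
    intro j m hjm
    have h2 := geom_tail hp₂0 hp₂1 hq₂' (A j * (1 - ρ)) m j hjm
    have heq : (fun k : ℕ => if m < k then A j * (1 - ρ) * p₂ ^ (k - j - 1) * q₂ else 0)
        = fun k => if m < k then joint j k else 0 := by
      funext k
      by_cases hk : m < k
      · rw [if_pos hk, if_pos hk, hjointA j k,
          if_neg (show ¬ k = j by omega), if_pos (show j < k by omega)]
        ring
      · rw [if_neg hk, if_neg hk]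
    rwa [heq] at h2
  -- summability of A
  have hgeo1 : Summable (fun j : ℕ => p₁ ^ (j - 1)) := by
    apply (summable_nat_add_iff 1).mp
    simpa using summable_geometric_of_lt_one hp₁0 hp₁1
  have hAsum : Summable A := by
    apply Summable.of_nonneg_of_le hA0 (g := A)
        (f := fun j => (π + (1 - π) * q₁) * p₁ ^ (j - 1))
    · intro j
      by_cases hj : j = 0
      · subst hj
        simp only [hA, if_pos rfl, Nat.zero_sub, pow_zero, mul_one]
        nlinarith [mul_nonneg h1π hq₁.le]
      · simp only [hA, if_neg hj]
        nlinarith [mul_nonneg hπ (pow_nonneg hp₁0 (j - 1))]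
    · exact hgeo1.mul_left _
  -- summability of joint on ℕ × ℕ
  have hJ : Summable (fun jk : ℕ × ℕ => joint jk.1 jk.2) := by
    refine (summable_prod_of_nonneg (fun x => hjnn x.1 x.2)).2 ⟨fun j => (hslice j).summable, ?_⟩
    have : (fun j => ∑' k, joint j k) = A := funext fun j => (hslice j).tsum_eq
    rwa [this]
  -- Sum 1
  have hsum1 : Summable (fun jk : ℕ × ℕ => if jk.1 ≤ n + 1 ∧ n + 1 < jk.2 then joint jk.1 jk.2 else 0) := by
    refine Summable.of_nonneg_of_le (fun x => ?_) (fun x => ?_) hJ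
    · split
      exacts [hjnn x.1 x.2, le_rfl]
    · split
      exacts [le_rfl, hjnn x.1 x.2]
  have hsl1 : ∀ j, Summable (fun k => if j ≤ n + 1 ∧ n + 1 < k then joint j k else 0) := by
    intro j
    refine Summable.of_nonneg_of_le (fun k => ?_) (fun k => ?_) (hslice j).summable
    · split
      exacts [hjnn j k, le_rfl]
    · split
      exacts [le_rfl, hjnn j k]
  have hS1 : (∑' jk : ℕ × ℕ, if jk.1 ≤ n + 1 ∧ n + 1 < jk.2 then joint jk.1 jk.2 else 0)
      = ∑ j ∈ Finset.range (n + 2), A j * (1 - ρ) * p₂ ^ (n + 1 - j) := by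
    rw [Summable.tsum_prod' hsum1 hsl1]
    have hinner : ∀ j, (∑' k, if j ≤ n + 1 ∧ n + 1 < k then joint j k else 0)
        = if j ≤ n + 1 then A j * (1 - ρ) * p₂ ^ (n + 1 - j) else 0 := by
      intro j
      by_cases hj : j ≤ n + 1
      · rw [if_pos hj]
        have heq : (fun k => if j ≤ n + 1 ∧ n + 1 < k then joint j k else 0)
            = fun k => if n + 1 < k then joint j k else 0 := by
          funext k
          by_cases hk : n + 1 < k
          · rw [if_pos ⟨hj, hk⟩, if_pos hk]
          · rw [if_neg (by tauto), if_neg hk]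
        rw [heq, (htail j (n + 1) hj).tsum_eq]
      · rw [if_neg hj]
        have heq : (fun k => if j ≤ n + 1 ∧ n + 1 < k then joint j k else 0)
            = fun _ => (0 : ℝ) := funext fun k => if_neg (by tauto)
        rw [heq, tsum_zero]
    rw [tsum_congr hinner, tsum_eq_sum (s := Finset.range (n + 2))
      (fun j hj => if_neg (by simp at hj; omega))]
    exact Finset.sum_congr rfl fun j hj => if_pos (by simp at hj; omega)
  -- Sum 3
  have hsum3 : Summable (fun jk : ℕ × ℕ => if jk.1 ≤ n ∧ n < jk.2 then joint jk.1 jk.2 else 0) := by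
    refine Summable.of_nonneg_of_le (fun x => ?_) (fun x => ?_) hJ
    · split
      exacts [hjnn x.1 x.2, le_rfl]
    · split
      exacts [le_rfl, hjnn x.1 x.2]
  have hsl3 : ∀ j, Summable (fun k => if j ≤ n ∧ n < k then joint j k else 0) := by
    intro j
    refine Summable.of_nonneg_of_le (fun k => ?_) (fun k => ?_) (hslice j).summable
    · split
      exacts [hjnn j k, le_rfl]
    · split
      exacts [le_rfl, hjnn j k]
  have hS3 : (∑' jk : ℕ × ℕ, if jk.1 ≤ n ∧ n < jk.2 then joint jk.1 jk.2 else 0)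
      = ∑ j ∈ Finset.range (n + 1), A j * (1 - ρ) * p₂ ^ (n - j) := by
    rw [Summable.tsum_prod' hsum3 hsl3]
    have hinner : ∀ j, (∑' k, if j ≤ n ∧ n < k then joint j k else 0)
        = if j ≤ n then A j * (1 - ρ) * p₂ ^ (n - j) else 0 := by
      intro j
      by_cases hj : j ≤ n
      · rw [if_pos hj]
        have heq : (fun k => if j ≤ n ∧ n < k then joint j k else 0)
            = fun k => if n < k then joint j k else 0 := by
          funext k
          by_cases hk : n < k
          · rw [if_pos ⟨hj, hk⟩, if_pos hk]
          · rw [if_neg (by tauto), if_neg hk]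
        rw [heq, (htail j n hj).tsum_eq]
      · rw [if_neg hj]
        have heq : (fun k => if j ≤ n ∧ n < k then joint j k else 0)
            = fun _ => (0 : ℝ) := funext fun k => if_neg (by tauto)
        rw [heq, tsum_zero]
    rw [tsum_congr hinner, tsum_eq_sum (s := Finset.range (n + 1))
      (fun j hj => if_neg (by simp at hj; omega))]
    exact Finset.sum_congr rfl fun j hj => if_pos (by simp at hj; omega)
  -- Sum 2
  have hsum2 : Summable (fun jk : ℕ × ℕ => if n < jk.1 ∧ jk.1 < jk.2 then joint jk.1 jk.2 else 0) := by
    refine Summable.of_nonneg_of_le (fun x => ?_) (fun x => ?_) hJ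
    · split
      exacts [hjnn x.1 x.2, le_rfl]
    · split
      exacts [le_rfl, hjnn x.1 x.2]
  have hsl2 : ∀ j, Summable (fun k => if n < j ∧ j < k then joint j k else 0) := by
    intro j
    refine Summable.of_nonneg_of_le (fun k => ?_) (fun k => ?_) (hslice j).summable
    · split
      exacts [hjnn j k, le_rfl]
    · split
      exacts [le_rfl, hjnn j k]
  have hS2 : (∑' jk : ℕ × ℕ, if n < jk.1 ∧ jk.1 < jk.2 then joint jk.1 jk.2 else 0)
      = (1 - ρ) * (1 - π) * p₁ ^ n := by
    rw [Summable.tsum_prod' hsum2 hsl2]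
    have hinner : ∀ j, (∑' k, if n < j ∧ j < k then joint j k else 0)
        = if n < j then A j * (1 - ρ) else 0 := by
      intro j
      by_cases hj : n < j
      · rw [if_pos hj]
        have heq : (fun k => if n < j ∧ j < k then joint j k else 0)
            = fun k => if j < k then joint j k else 0 := by
          funext k
          by_cases hk : j < k
          · rw [if_pos ⟨hj, hk⟩, if_pos hk]
          · rw [if_neg (by tauto), if_neg hk]
        rw [heq, (htail j j le_rfl).tsum_eq, Nat.sub_self, pow_zero, mul_one]
      · rw [if_neg hj]
        have heq : (fun k => if n < j ∧ j < k then joint j k else 0)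
            = fun _ => (0 : ℝ) := funext fun k => if_neg (by tauto)
        rw [heq, tsum_zero]
    rw [tsum_congr hinner]
    have hg := geom_tail hp₁0 hp₁1 hq₁' ((1 - ρ) * (1 - π)) n 0 (Nat.zero_le n)
    have heq : (fun j : ℕ => if n < j then (1 - ρ) * (1 - π) * p₁ ^ (j - 0 - 1) * q₁ else 0)
        = fun j => if n < j then A j * (1 - ρ) else 0 := by
      funext j
      by_cases hj : n < j
      · rw [if_pos hj, if_pos hj]
        simp only [hA]
        rw [if_neg (show ¬ j = 0 by omega)]
        simp only [Nat.sub_zero]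
        ring
      · rw [if_neg hj, if_neg hj]
    rw [heq] at hg
    rw [hg.tsum_eq, Nat.sub_zero]
  rw [hS1, hS2, hS3, Finset.sum_range_succ]
  have hAn1 : A (n + 1) = (1 - π) * p₁ ^ n * q₁ := by
    simp only [hA]
    rw [if_neg (by omega)]
    simp
  have hterm : ∀ j ∈ Finset.range (n + 1),
      A j * (1 - ρ) * p₂ ^ (n + 1 - j) = p₂ * (A j * (1 - ρ) * p₂ ^ (n - j)) := by
    intro j hj
    have he : n + 1 - j = (n - j) + 1 := by simp at hj; omega
    rw [he, pow_succ]; ring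
  rw [Finset.sum_congr rfl hterm, ← Finset.mul_sum, hAn1, Nat.sub_self, pow_zero, mul_one]
  ring
end
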